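/- Let t ≥ 3, k ≥ 3, and l ≥ t + 1, and let n be a positive integer. Suppose φ is a coloring of the edges of the complete graph on vertex set {1, …, n} with two colors, 'first' and 'second', containing no monochromatic K_k in color 'first' and no monochromatic K_{l − t + 1} in color 'second'. Let χ be the 3-coloring of the edges of the complete graph on {1, …, t + 1} × {1, …, n} defined as follows. For block indices i > j, call the block pair (i, j) type B if (i, j) = (2, 1) or (i ≥ 4 and 3 ≤ j ≤ i − 1), and type C if i ≥ 3 and j ∈ {1, 2}. Set: (a) χ((i, v), (i, w)) = 2 if φ(v, w) = 'first' and 3 if φ(v, w) = 'second'; (b) for i ≠ j with type B block pair: χ((i, v), (j, w)) = 3 if v = w, else 2 if φ(v, w) = 'first' and 1 if φ(v, w) = 'second'; (c) for i ≠ j with type C block pair: χ((i, v), (j, w)) = 1 if v = w, else 2 if φ(v, w) = 'first' and 3 if φ(v, w) = 'second'. Then χ contains no monochromatic K_l of color 3. -/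
import Mathlib


/-- The two colors of the base coloring `φ`. -/
inductive TwoColor
  | first
  | second
deriving DecidableEq

/-- A coloring `χ` of the edges of the complete graph on `V` contains a
monochromatic `K_m` of color `c`: there are `m` vertices all of whose
pairwise edges receive color `c`. -/
def HasMonoClique {V C : Type*} (χ : V → V → C) (c : C) (m : ℕ) : Prop :=
  ∃ s : Finset V, s.card = m ∧ ∀ u ∈ s, ∀ v ∈ s, u ≠ v → χ u v = c

/-- Block pair `(i, j)` (with 1-based block indices, `i > j`) is of type `B`:
`(i, j) = (2, 1)`, or `i ≥ 4` and `3 ≤ j ≤ i - 1`. -/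
def BlockTypeB (i j : ℕ) : Prop :=
  (i = 2 ∧ j = 1) ∨ (4 ≤ i ∧ 3 ≤ j ∧ j ≤ i - 1)

instance (i j : ℕ) : Decidable (BlockTypeB i j) := by
  unfold BlockTypeB; infer_instance

/-- The 3-coloring `χ` of the edges of the complete graph on
`{1, …, t+1} × {1, …, n}` built from a two-coloring `φ` of the edges of `K_n`.
Vertices are pairs `(i, v)` with block index `i` (represented 0-based, so the
1-based block index is `i + 1`).  Within a block the colors `first`/`second` of
`φ` become `2`/`3`; between two distinct blocks whose (ordered) 1-based pair is
of type `B`, diagonal edges (`v = w`) get color `3` and otherwise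
`first`/`second` become `2`/`1`; between blocks of type `C` (all remaining
pairs, i.e. `i ≥ 3` and `j ∈ {1, 2}`), diagonal edges get color `1` and
otherwise `first`/`second` become `2`/`3`. -/
def chi (t n : ℕ) (φ : Fin n → Fin n → TwoColor) :
    Fin (t + 1) × Fin n → Fin (t + 1) × Fin n → ℕ := fun p q =>
  if p.1 = q.1 then
    if φ p.2 q.2 = TwoColor.first then 2 else 3
  else
    if BlockTypeB (max (p.1.1 + 1) (q.1.1 + 1)) (min (p.1.1 + 1) (q.1.1 + 1)) then
      if p.2 = q.2 then 3
      else if φ p.2 q.2 = TwoColor.first then 2 else 1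
    else
      if p.2 = q.2 then 1
      else if φ p.2 q.2 = TwoColor.first then 2 else 3

private theorem TwoColor.eq_second {c : TwoColor} (h : c ≠ TwoColor.first) :
    c = TwoColor.second := by cases c <;> simp_all

private theorem blockTypeB_iff (i j : ℕ) (h : i ≠ j) :
    BlockTypeB (max (i+1) (j+1)) (min (i+1) (j+1)) ↔
      ((i ≤ 1 ∧ j ≤ 1) ∨ (2 ≤ i ∧ 2 ≤ j)) := by
  unfold BlockTypeB; omega

/-- The coloring `chi t n φ` contains no monochromatic `K_l` of color `3`. -/
theorem chi_no_mono_color_three (t k l n : ℕ) (ht : 3 ≤ t) (hk : 3 ≤ k) (hl : t + 1 ≤ l) (hn : 0 < n)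
    (φ : Fin n → Fin n → TwoColor)
    (hφsymm : ∀ v w, φ v w = φ w v)
    (hφ1 : ¬ HasMonoClique φ TwoColor.first k)
    (hφ2 : ¬ HasMonoClique φ TwoColor.second (l - t + 1)) :
    ¬ HasMonoClique (chi t n φ) 3 l := by
  rintro ⟨s, hcard, hmono⟩
  -- If the second coordinates differ, φ is second
  have hsecond : ∀ p ∈ s, ∀ q ∈ s, p.2 ≠ q.2 → φ p.2 q.2 = TwoColor.second := by
    intro p hp q hq hpq
    have h3 := hmono p hp q hq (fun h => hpq (congrArg Prod.snd h))
    unfold chi at h3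
    split_ifs at h3 <;> first
      | (exact TwoColor.eq_second (by assumption))
      | omega
  -- cross-fiber, cross-block pairs: not both low, not both high
  have hone : ∀ p ∈ s, ∀ q ∈ s, p.2 ≠ q.2 → p.1 ≠ q.1 →
      ¬((p.1.1 ≤ 1 ∧ q.1.1 ≤ 1) ∨ (2 ≤ p.1.1 ∧ 2 ≤ q.1.1)) := by
    intro p hp q hq hpq hij
    have h3 := hmono p hp q hq (fun h => hpq (congrArg Prod.snd h))
    have hij' : p.1.1 ≠ q.1.1 := fun h => hij (Fin.val_injective h)
    rw [← blockTypeB_iff _ _ hij']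
    intro hB
    unfold chi at h3
    split_ifs at h3 <;> omega
  -- same-fiber, cross-block pairs: both low or both high
  have hboth : ∀ p ∈ s, ∀ q ∈ s, p.2 = q.2 → p.1 ≠ q.1 →
      ((p.1.1 ≤ 1 ∧ q.1.1 ≤ 1) ∨ (2 ≤ p.1.1 ∧ 2 ≤ q.1.1)) := by
    intro p hp q hq hpq hij
    have hne : p ≠ q := fun h => hij (congrArg Prod.fst h)
    have h3 := hmono p hp q hq hne
    have hij' : p.1.1 ≠ q.1.1 := fun h => hij (Fin.val_injective h)
    rw [← blockTypeB_iff _ _ hij']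
    by_contra hB
    unfold chi at h3
    split_ifs at h3 <;> omega
  classical
  set sl := s.filter (fun p => p.1.1 ≤ 1) with hsl
  set sh := s.filter (fun p => ¬ p.1.1 ≤ 1) with hsh
  have hsplit : sl.card + sh.card = s.card :=
    Finset.card_filter_add_card_filter_not _
  set Wl := sl.image Prod.snd with hWl
  set Wh := sh.image Prod.snd with hWh
  set W := s.image Prod.snd with hW
  -- low part
  have claimA : sl.card ≤ Wl.card + 1 := by
    by_cases hcase : ∃ p ∈ sl, ∃ q ∈ sl, p.2 = q.2 ∧ p ≠ q
    · obtain ⟨p, hp, q, hq, hpq2, hpqne⟩ := hcase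
      have hp' := (Finset.mem_filter.mp hp)
      have hq' := (Finset.mem_filter.mp hq)
      have hpq1 : p.1 ≠ q.1 := by
        intro h; exact hpqne (Prod.ext h hpq2)
      -- every element of sl has second coordinate p.2
      have hconst : ∀ r ∈ sl, r.2 = p.2 := by
        intro r hr
        have hr' := Finset.mem_filter.mp hr
        by_contra hne
        have h1 : r.1 = p.1 := by
          by_contra h1
          exact hone r hr'.1 p hp'.1 hne h1 (Or.inl ⟨hr'.2, hp'.2⟩)
        have hne2 : r.2 ≠ q.2 := fun h => hne (h.trans hpq2.symm)
        have h2 : r.1 = q.1 := by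
          by_contra h2
          exact hone r hr'.1 q hq'.1 hne2 h2 (Or.inl ⟨hr'.2, hq'.2⟩)
        exact hpq1 (h1 ▸ h2)
      -- first coordinates injective and in {0,1}
      have hinj : Set.InjOn (fun r : Fin (t + 1) × Fin n => r.1.1) (sl : Set (Fin (t + 1) × Fin n)) := by
        intro a ha b hb hab
        have : a.1 = b.1 := Fin.val_injective hab
        exact Prod.ext this (((hconst a ha).trans (hconst b hb).symm))
      have hcard2 : sl.card ≤ 2 := by
        have := Finset.card_image_of_injOn hinj
        have hsub : sl.image (fun r => r.1.1) ⊆ Finset.range 2 := by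
          intro x hx
          obtain ⟨r, hr, hrx⟩ := Finset.mem_image.mp hx
          have := (Finset.mem_filter.mp hr).2
          rw [Finset.mem_range]; omega
        have := Finset.card_le_card hsub
        simp [Finset.card_range] at this
        omega
      have hWl1 : 1 ≤ Wl.card := by
        apply Finset.card_pos.mpr
        exact ⟨p.2, Finset.mem_image.mpr ⟨p, hp, rfl⟩⟩
      omega
    · push_neg at hcase
      have hinj : Set.InjOn Prod.snd (sl : Set (Fin (t + 1) × Fin n)) := by
        intro a ha b hb hab
        exact hcase a ha b hb hab
      have : Wl.card = sl.card := by rw [hWl]; exact Finset.card_image_of_injOn hinj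
      omega
  -- high part
  have claimB : sh.card ≤ Wh.card + (t - 2) := by
    by_cases hcase : ∃ p ∈ sh, ∃ q ∈ sh, p.2 = q.2 ∧ p ≠ q
    · obtain ⟨p, hp, q, hq, hpq2, hpqne⟩ := hcase
      have hp' := (Finset.mem_filter.mp hp)
      have hq' := (Finset.mem_filter.mp hq)
      have hpq1 : p.1 ≠ q.1 := by
        intro h; exact hpqne (Prod.ext h hpq2)
      have hconst : ∀ r ∈ sh, r.2 = p.2 := by
        intro r hr
        have hr' := Finset.mem_filter.mp hr
        by_contra hne
        have h1 : r.1 = p.1 := by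
          by_contra h1
          exact hone r hr'.1 p hp'.1 hne h1 (Or.inr ⟨by omega, by omega⟩)
        have hne2 : r.2 ≠ q.2 := fun h => hne (h.trans hpq2.symm)
        have h2 : r.1 = q.1 := by
          by_contra h2
          exact hone r hr'.1 q hq'.1 hne2 h2 (Or.inr ⟨by omega, by omega⟩)
        exact hpq1 (h1 ▸ h2)
      have hinj : Set.InjOn (fun r : Fin (t + 1) × Fin n => r.1.1) (sh : Set (Fin (t + 1) × Fin n)) := by
        intro a ha b hb hab
        have : a.1 = b.1 := Fin.val_injective hab
        exact Prod.ext this (((hconst a ha).trans (hconst b hb).symm))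
      have hcard2 : sh.card ≤ t - 1 := by
        have hic := Finset.card_image_of_injOn hinj
        have hsub : sh.image (fun r => r.1.1) ⊆ Finset.Icc 2 t := by
          intro x hx
          obtain ⟨r, hr, hrx⟩ := Finset.mem_image.mp hx
          have := (Finset.mem_filter.mp hr).2
          have := r.1.2
          rw [Finset.mem_Icc]; omega
        have := Finset.card_le_card hsub
        rw [Nat.card_Icc] at this
        omega
      have hWh1 : 1 ≤ Wh.card := by
        apply Finset.card_pos.mpr
        exact ⟨p.2, Finset.mem_image.mpr ⟨p, hp, rfl⟩⟩
      omega
    · push_neg at hcase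
      have hinj : Set.InjOn Prod.snd (sh : Set (Fin (t + 1) × Fin n)) := by
        intro a ha b hb hab
        exact hcase a ha b hb hab
      have : Wh.card = sh.card := by rw [hWh]; exact Finset.card_image_of_injOn hinj
      omega
  -- Wl and Wh are disjoint
  have hdisj : Disjoint Wl Wh := by
    rw [Finset.disjoint_left]
    intro v hvl hvh
    obtain ⟨p, hp, hpv⟩ := Finset.mem_image.mp hvl
    obtain ⟨q, hq, hqv⟩ := Finset.mem_image.mp hvh
    have hp' := Finset.mem_filter.mp hp
    have hq' := Finset.mem_filter.mp hq
    have hpq1 : p.1 ≠ q.1 := by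
      intro h
      have : p.1.1 = q.1.1 := congrArg Fin.val h
      omega
    have := hboth p hp'.1 q hq'.1 (hpv.trans hqv.symm) hpq1
    have h2 := hp'.2
    have h3 := hq'.2
    omega
  have hsubW : Wl ∪ Wh ⊆ W := by
    apply Finset.union_subset <;>
      exact Finset.image_subset_image (Finset.filter_subset _ _)
  have hWsum : Wl.card + Wh.card ≤ W.card := by
    rw [← Finset.card_union_of_disjoint hdisj]
    exact Finset.card_le_card hsubW
  -- W is small
  have hWcard : W.card ≤ l - t := by
    by_contra hbig
    push_neg at hbig
    obtain ⟨U, hU, hUcard⟩ := Finset.exists_subset_card_eq (show l - t + 1 ≤ W.card by omega)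
    apply hφ2
    refine ⟨U, hUcard, ?_⟩
    intro u hu v hv huv
    obtain ⟨p, hp, hpu⟩ := Finset.mem_image.mp (hU hu)
    obtain ⟨q, hq, hqv⟩ := Finset.mem_image.mp (hU hv)
    subst hpu hqv
    exact hsecond p hp q hq huv
  omega
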